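/- arXiv:0812.4156 — 3 statements merged into one kernel-verified Lean document; each statement's English description precedes it below -/
import Mathlib

section
/- Let (Ω, 𝓕, P) be a probability space, τ : Ω → [0, ∞) a measurable random time, t ≥ 0, and 𝓗 a sub-σ-algebra of 𝓕. Let 𝓙_t be the σ-algebra generated by the events {τ > u} for u ∈ [0, t], and set 𝓕_t = 𝓙_t ⊔ 𝓗 (the σ-algebra generated by their union). Assume P(τ > t | 𝓗) > 0 almost surely. Then for every integrable random variable Y satisfying Y = 1_{τ > t} · Y almost surely, one has, almost surely, E[Y | 𝓕_t] = 1_{τ > t} · E[Y | 𝓗] / P(τ > t | 𝓗). -/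
/-!
On the survival event `A = {τ > t}` the σ-algebra `𝓙_t` is trivial, since each generator
`{τ > u}`, `u ≤ t`, contains `A`; so every set of `𝓙_t ⊔ 𝓗` meets `A` like some set of `𝓗`.
Both `Y` and `X = 1_A · E[Y | 𝓗] / P(A | 𝓗)` vanish off `A`, so it suffices to compare their
integrals over sets of `𝓗`, i.e. to check `E[X | 𝓗] = E[Y | 𝓗]`, which is the pull-out property.
Integrability of `X` comes from the same pull-out identity for non-negative `𝓗`-measurable `f`,
`∫ 1_A f = ∫ P(A | 𝓗) f`, which holds in `[0, ∞]` without integrability assumptions.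
-/

open MeasureTheory

namespace MeasureTheory

variable {Ω : Type*} {m m0 : MeasurableSpace Ω} {μ : Measure Ω}

theorem exists_measurableSet_inter_eq_of_measurableSet_generateFrom_sup {G : Set (Set Ω)}
    {A S : Set Ω} (hG : ∀ s ∈ G, A ⊆ s) (hS : MeasurableSet[.generateFrom G ⊔ m] S) :
    ∃ C, MeasurableSet[m] C ∧ A ∩ S = A ∩ C := by
  have hle : (.generateFrom G ⊔ m).comap ((↑) : A → Ω) ≤ m.comap (↑) := by
    rw [MeasurableSpace.comap_sup, MeasurableSpace.comap_generateFrom]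
    refine sup_le (MeasurableSpace.generateFrom_le ?_) le_rfl
    rintro _ ⟨s, hs, rfl⟩
    rw [Set.preimage_eq_univ_iff.mpr (by simpa using hG s hs)]
    exact MeasurableSet.univ
  obtain ⟨C, hC, hCS⟩ := hle _ ⟨S, hS, rfl⟩
  exact ⟨C, hC, (Subtype.preimage_coe_eq_preimage_coe_iff.mp hCS).symm⟩

theorem setIntegral_eq_of_inter_eq {E : Type*} [NormedAddCommGroup E] [NormedSpace ℝ E]
    {f : Ω → E} {A s C : Set Ω} (hA : MeasurableSet A) (hf : ∀ᵐ ω ∂μ, ω ∉ A → f ω = 0)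
    (hsC : A ∩ s = A ∩ C) : ∫ ω in s, f ω ∂μ = ∫ ω in C, f ω ∂μ := by
  have hfA : f =ᵐ[μ] A.indicator f := by
    filter_upwards [hf] with ω hω
    by_cases hωA : ω ∈ A <;> simp [hωA, hω]
  rw [integral_congr_ae (ae_restrict_of_ae hfA), integral_congr_ae (ae_restrict_of_ae hfA),
    setIntegral_indicator hA, setIntegral_indicator hA, Set.inter_comm s, Set.inter_comm C, hsC]

theorem lintegral_ofReal_condExp_mul (hm : m ≤ m0) [SigmaFinite (μ.trim hm)] {g : Ω → ℝ}
    (hg : Integrable g μ) (hg_nonneg : 0 ≤ᵐ[μ] g) {f : Ω → ENNReal} (hf : Measurable[m] f) :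
    ∫⁻ ω, ENNReal.ofReal (μ[g|m] ω) * f ω ∂μ = ∫⁻ ω, ENNReal.ofReal (g ω) * f ω ∂μ := by
  have htrim : (μ.withDensity fun ω => ENNReal.ofReal (μ[g|m] ω)).trim hm
      = (μ.withDensity fun ω => ENNReal.ofReal (g ω)).trim hm := by
    refine @Measure.ext _ m _ _ fun s hs => ?_
    rw [trim_measurableSet_eq hm hs, trim_measurableSet_eq hm hs,
      withDensity_apply _ (hm s hs), withDensity_apply _ (hm s hs),
      ← ofReal_integral_eq_lintegral_ofReal integrable_condExp.integrableOn
        (ae_restrict_of_ae (condExp_nonneg hg_nonneg)),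
      ← ofReal_integral_eq_lintegral_ofReal hg.integrableOn (ae_restrict_of_ae hg_nonneg),
      setIntegral_condExp hm hg hs]
  have hf₀ : AEMeasurable f μ := (hf.mono hm le_rfl).aemeasurable
  have hZ : AEMeasurable (fun ω => ENNReal.ofReal (μ[g|m] ω)) μ :=
    (stronglyMeasurable_condExp.measurable.mono hm le_rfl).ennreal_ofReal.aemeasurable
  have h := congrArg (fun ν => ∫⁻ ω, f ω ∂ν) htrim
  simp only [lintegral_trim hm hf] at h
  rwa [lintegral_withDensity_eq_lintegral_mul₀ hZ hf₀,
    lintegral_withDensity_eq_lintegral_mul₀ hg.1.aemeasurable.ennreal_ofReal hf₀] at h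

theorem integrable_mul_div_condExp (hm : m ≤ m0) [SigmaFinite (μ.trim hm)] {g F : Ω → ℝ}
    (hg : Integrable g μ) (hg_nonneg : 0 ≤ᵐ[μ] g) (hg_pos : ∀ᵐ ω ∂μ, 0 < μ[g|m] ω)
    (hF : StronglyMeasurable[m] F) (hF_int : Integrable F μ) :
    Integrable (fun ω => g ω * F ω / μ[g|m] ω) μ := by
  have hZ : StronglyMeasurable[m] μ[g|m] := stronglyMeasurable_condExp
  refine ⟨(hg.1.aemeasurable.mul (hF.measurable.mono hm le_rfl).aemeasurable
    |>.div (hZ.measurable.mono hm le_rfl).aemeasurable).aestronglyMeasurable, ?_⟩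
  have hnorm : ∀ᵐ ω ∂μ, ‖g ω * F ω / μ[g|m] ω‖ₑ
      = ENNReal.ofReal (g ω) * ENNReal.ofReal (|F ω| / μ[g|m] ω) := by
    filter_upwards [hg_nonneg, hg_pos] with ω hg0 hZ0
    rw [← ENNReal.ofReal_mul hg0, ← Real.enorm_abs, abs_div, abs_mul, abs_of_nonneg hg0,
      abs_of_pos hZ0, mul_div_assoc,
      Real.enorm_eq_ofReal (mul_nonneg hg0 (div_nonneg (abs_nonneg _) hZ0.le))]
  have hcancel : ∀ᵐ ω ∂μ, ENNReal.ofReal (μ[g|m] ω) * ENNReal.ofReal (|F ω| / μ[g|m] ω)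
      = ‖F ω‖ₑ := by
    filter_upwards [hg_pos] with ω hZ0
    rw [← ENNReal.ofReal_mul hZ0.le, mul_div_cancel₀ _ hZ0.ne', Real.enorm_eq_ofReal_abs]
  have hratio : Measurable[m] fun ω => ENNReal.ofReal (|F ω| / μ[g|m] ω) :=
    ((measurable_abs.comp hF.measurable).div hZ.measurable).ennreal_ofReal
  rw [HasFiniteIntegral, lintegral_congr_ae hnorm,
    ← lintegral_ofReal_condExp_mul hm hg hg_nonneg hratio, lintegral_congr_ae hcancel]
  exact hF_int.2

theorem condExp_mul_div_condExp (hm : m ≤ m0) [SigmaFinite (μ.trim hm)] {g F : Ω → ℝ}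
    (hg : Integrable g μ) (hg_nonneg : 0 ≤ᵐ[μ] g) (hg_pos : ∀ᵐ ω ∂μ, 0 < μ[g|m] ω)
    (hF : StronglyMeasurable[m] F) (hF_int : Integrable F μ) :
    μ[fun ω => g ω * F ω / μ[g|m] ω | m] =ᵐ[μ] F := by
  have hint := integrable_mul_div_condExp hm hg hg_nonneg hg_pos hF hF_int
  have hrw : (fun ω => g ω * F ω / μ[g|m] ω) = (F / μ[g|m]) * g := by
    funext ω
    simp only [Pi.mul_apply, Pi.div_apply]
    ring
  rw [hrw] at hint ⊢
  filter_upwards [condExp_mul_of_stronglyMeasurable_left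
      (hF.div stronglyMeasurable_condExp) hint hg, hg_pos] with ω hω hZ0
  rw [hω, Pi.mul_apply, Pi.div_apply, div_mul_cancel₀ _ hZ0.ne']

end MeasureTheory

theorem jeanblanc_rutkowski_formula_general
    {Ω : Type*} {m0 : MeasurableSpace Ω} {P : Measure Ω} [IsProbabilityMeasure P]
    {τ : Ω → ℝ} (hτ_meas : Measurable τ)
    {t : ℝ} (ht : 0 ≤ t)
    {𝓗 : MeasurableSpace Ω} (h𝓗 : 𝓗 ≤ m0)
    (𝓙 : MeasurableSpace Ω)
    (h𝓙 : 𝓙 = MeasurableSpace.generateFrom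
      {s | ∃ u : ℝ, 0 ≤ u ∧ u ≤ t ∧ s = {ω | u < τ ω}})
    (hpos : ∀ᵐ ω ∂P,
      0 < condExp 𝓗 P ((Set.indicator {ω' | t < τ ω'} (fun _ => (1 : ℝ)))) ω)
    {Y : Ω → ℝ} (hY_int : Integrable Y P)
    (hY_def : Y =ᵐ[P] fun ω => Set.indicator {ω' | t < τ ω'} (fun _ => (1 : ℝ)) ω * Y ω) :
    condExp (𝓙 ⊔ 𝓗) P Y =ᵐ[P] fun ω =>
      Set.indicator {ω' | t < τ ω'} (fun _ => (1 : ℝ)) ω * condExp 𝓗 P Y ω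
        / condExp 𝓗 P ((Set.indicator {ω' | t < τ ω'} (fun _ => (1 : ℝ)))) ω := by
  set A : Set Ω := {ω | t < τ ω}
  set ind : Ω → ℝ := A.indicator fun _ => 1
  set X := fun ω => ind ω * P[Y|𝓗] ω / P[ind|𝓗] ω
  have hA_subset : ∀ s ∈ {s | ∃ u : ℝ, 0 ≤ u ∧ u ≤ t ∧ s = {ω | u < τ ω}}, A ⊆ s := by
    rintro _ ⟨u, -, hut, rfl⟩ ω hω
    exact hut.trans_lt hω
  have h𝓙_le : 𝓙 ≤ m0 := h𝓙 ▸ MeasurableSpace.generateFrom_le (by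
    rintro _ ⟨u, -, -, rfl⟩
    exact hτ_meas measurableSet_Ioi)
  have hA : MeasurableSet[𝓙] A := h𝓙 ▸ .basic _ ⟨t, ht, le_rfl, rfl⟩
  have hind_int : Integrable ind P := (integrable_const 1).indicator (h𝓙_le A hA)
  have hind_nonneg : 0 ≤ᵐ[P] ind := .of_forall (Set.indicator_nonneg fun _ _ => zero_le_one)
  have hX_int : Integrable X P := integrable_mul_div_condExp h𝓗 hind_int hind_nonneg hpos
    stronglyMeasurable_condExp integrable_condExp
  have hX_condExp : P[X|𝓗] =ᵐ[P] P[Y|𝓗] := condExp_mul_div_condExp h𝓗 hind_int hind_nonneg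
    hpos stronglyMeasurable_condExp integrable_condExp
  have hX_off : ∀ᵐ ω ∂P, ω ∉ A → X ω = 0 := .of_forall fun ω hω => by simp [X, ind, hω]
  have hY_off : ∀ᵐ ω ∂P, ω ∉ A → Y ω = 0 := by
    filter_upwards [hY_def] with ω hω hωA
    simpa [ind, hωA] using hω
  refine (ae_eq_condExp_of_forall_setIntegral_eq (sup_le h𝓙_le h𝓗) hY_int
    (fun _ _ _ => hX_int.integrableOn) (fun s hs _ => ?_) ?_).symm
  · obtain ⟨C, hC, hsC⟩ :=
      exists_measurableSet_inter_eq_of_measurableSet_generateFrom_sup hA_subset (h𝓙 ▸ hs)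
    calc ∫ ω in s, X ω ∂P = ∫ ω in C, X ω ∂P := setIntegral_eq_of_inter_eq (h𝓙_le A hA) hX_off hsC
      _ = ∫ ω in C, P[X|𝓗] ω ∂P := (setIntegral_condExp h𝓗 hX_int hC).symm
      _ = ∫ ω in C, P[Y|𝓗] ω ∂P := setIntegral_congr_ae (h𝓗 C hC) (hX_condExp.mono fun _ h _ => h)
      _ = ∫ ω in C, Y ω ∂P := setIntegral_condExp h𝓗 hY_int hC
      _ = ∫ ω in s, Y ω ∂P := (setIntegral_eq_of_inter_eq (h𝓙_le A hA) hY_off hsC).symm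
  · have hind : Measurable[𝓙 ⊔ 𝓗] ind := measurable_const.indicator (le_sup_left (b := 𝓗) A hA)
    have hE : Measurable[𝓙 ⊔ 𝓗] P[Y|𝓗] :=
      stronglyMeasurable_condExp.measurable.mono le_sup_right le_rfl
    have hZ : Measurable[𝓙 ⊔ 𝓗] P[ind|𝓗] :=
      stronglyMeasurable_condExp.measurable.mono le_sup_right le_rfl
    exact ((hind.mul hE).div hZ).aestronglyMeasurable

/-- **Jeanblanc–Rutkowski pricing formula.** For a random (default) time `τ ≥ 0`,
`𝓙_t = σ({τ > u}, u ≤ t)`, `𝓕_t = 𝓙_t ⊔ 𝓗`, and `P(τ > t | 𝓗) > 0` a.s., every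
integrable payoff `Y` vanishing on `{τ ≤ t}` satisfies
`E[Y | 𝓕_t] = 1_{τ > t} · E[Y | 𝓗] / P(τ > t | 𝓗)` almost surely. -/
theorem jeanblanc_rutkowski_formula
    {Ω : Type*} {m0 : MeasurableSpace Ω} {P : Measure Ω} [IsProbabilityMeasure P]
    {τ : Ω → ℝ} (hτ_meas : Measurable τ) (hτ_nonneg : ∀ ω, 0 ≤ τ ω)
    {t : ℝ} (ht : 0 ≤ t)
    {𝓗 : MeasurableSpace Ω} (h𝓗 : 𝓗 ≤ m0)
    (𝓙 : MeasurableSpace Ω)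
    (h𝓙 : 𝓙 = MeasurableSpace.generateFrom
      {s | ∃ u : ℝ, 0 ≤ u ∧ u ≤ t ∧ s = {ω | u < τ ω}})
    (hpos : ∀ᵐ ω ∂P,
      0 < condExp 𝓗 P ((Set.indicator {ω' | t < τ ω'} (fun _ => (1 : ℝ)))) ω)
    {Y : Ω → ℝ} (hY_int : Integrable Y P)
    (hY_def : Y =ᵐ[P] fun ω => Set.indicator {ω' | t < τ ω'} (fun _ => (1 : ℝ)) ω * Y ω) :
    condExp (𝓙 ⊔ 𝓗) P Y =ᵐ[P] fun ω =>
      Set.indicator {ω' | t < τ ω'} (fun _ => (1 : ℝ)) ω * condExp 𝓗 P Y ω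
        / condExp 𝓗 P ((Set.indicator {ω' | t < τ ω'} (fun _ => (1 : ℝ)))) ω :=
  jeanblanc_rutkowski_formula_general hτ_meas ht h𝓗 𝓙 h𝓙 hpos hY_int hY_def
end

section
/- Let (Ω, 𝓕, P) be a probability space, τ : Ω → [0, ∞) a measurable random time, t ≥ 0, and 𝓗 a sub-σ-algebra of 𝓕. Let 𝓙_t be the σ-algebra generated by the events {τ > u} for u ∈ [0, t], and let σ(τ) be the σ-algebra generated by τ. Then for every integrable random variable Y one has, almost surely, 1_{τ ≤ t} · E[Y | 𝓙_t ⊔ 𝓗] = 1_{τ ≤ t} · E[Y | σ(τ) ⊔ 𝓗]. -/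
open MeasureTheory

/-!
On `{τ ≤ t}` the history `𝓙_t` already reveals `τ`: intersected with `{τ ≤ t}`, a generator
`{τ > u}` of `σ(τ)` is `{τ ≤ t}` itself (`u < 0`, as `τ ≥ 0`), a generator of `𝓙_t` intersected
with `{τ ≤ t}` (`0 ≤ u ≤ t`), or empty (`u > t`). Hence the σ-algebras `𝓙_t ⊔ 𝓗 ≤ σ(τ) ⊔ 𝓗` have
the same trace on the `𝓙_t`-measurable set `{τ ≤ t}`, and conditional expectations with respect
to σ-algebras with the same trace on a set agree almost everywhere on that set.
-/

namespace MeasurableSpace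

variable {Ω : Type*} {m m₁ m₂ : MeasurableSpace Ω} {s : Set Ω}

abbrev traceOn (m : MeasurableSpace Ω) (s : Set Ω) (hs : MeasurableSet[m] s) :
    MeasurableSpace Ω where
  MeasurableSet' A := MeasurableSet[m] (s ∩ A)
  measurableSet_empty := by simp
  measurableSet_compl A hA := by
    rw [← Set.sdiff_eq, ← Set.sdiff_self_inter]
    exact hs.diff hA
  measurableSet_iUnion f hf := by
    rw [Set.inter_iUnion]
    exact .iUnion hf

@[simp]
theorem measurableSet_traceOn {hs : MeasurableSet[m] s} {A : Set Ω} :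
    MeasurableSet[traceOn m s hs] A ↔ MeasurableSet[m] (s ∩ A) :=
  Iff.rfl

theorem le_traceOn (hs : MeasurableSet[m] s) : m ≤ traceOn m s hs :=
  fun _ hA => hs.inter hA

theorem traceOn_mono (h : m₁ ≤ m₂) (hs : MeasurableSet[m₁] s) :
    traceOn m₁ s hs ≤ traceOn m₂ s (h s hs) :=
  fun _ hA => h _ hA

theorem sup_le_traceOn_sup {m : MeasurableSpace Ω} (hs : MeasurableSet[m₁] s)
    (h : m₂ ≤ traceOn m₁ s hs) :
    m₂ ⊔ m ≤ traceOn (m₁ ⊔ m) s (le_sup_left (b := m) s hs) :=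
  sup_le (h.trans (traceOn_mono le_sup_left hs)) (le_sup_right.trans (le_traceOn _))

theorem measurableSet_inter_iff_of_le_traceOn (h : m₁ ≤ m₂) (hs : MeasurableSet[m₁] s)
    (h₂ : m₂ ≤ traceOn m₁ s hs) (A : Set Ω) :
    MeasurableSet[m₁] (s ∩ A) ↔ MeasurableSet[m₂] (s ∩ A) := by
  refine ⟨fun hA => h _ hA, fun hA => ?_⟩
  simpa only [measurableSet_traceOn, ← Set.inter_assoc, Set.inter_self] using h₂ _ hA

end MeasurableSpace

open MeasurableSpace

theorem condExp_ae_eq_restrict_of_le_traceOn {Ω E : Type*} [NormedAddCommGroup E]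
    [NormedSpace ℝ E] [CompleteSpace E] {m₁ m₂ m0 : MeasurableSpace Ω}
    {μ : Measure Ω} {s : Set Ω} {f : Ω → E} (hm₁ : m₁ ≤ m0) (hm₂ : m₂ ≤ m0)
    [SigmaFinite (μ.trim hm₁)] [SigmaFinite (μ.trim hm₂)] (h : m₁ ≤ m₂)
    (hs : MeasurableSet[m₁] s) (h₂ : m₂ ≤ traceOn m₁ s hs) :
    μ[f | m₁] =ᵐ[μ.restrict s] μ[f | m₂] :=
  condExp_ae_eq_restrict_of_measurableSpace_eq_on hm₁ hm₂ hs
    (measurableSet_inter_iff_of_le_traceOn h hs h₂)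

theorem indicator_one_mul_ae_eq_of_ae_eq_restrict {Ω M : Type*} {m0 : MeasurableSpace Ω}
    [MulZeroOneClass M] {μ : Measure Ω} {s : Set Ω} {f g : Ω → M} (hs : MeasurableSet s)
    (h : f =ᵐ[μ.restrict s] g) :
    (fun ω => s.indicator (fun _ => (1 : M)) ω * f ω) =ᵐ[μ]
      fun ω => s.indicator (fun _ => (1 : M)) ω * g ω := by
  simpa only [← Set.indicator_mul_left, one_mul] using
    (ae_eq_restrict_iff_indicator_ae_eq hs).mp h

section DefaultTime

variable {Ω : Type*} {τ : Ω → ℝ} {t : ℝ}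

abbrev defaultSigmaAlgebra (τ : Ω → ℝ) (t : ℝ) : MeasurableSpace Ω :=
  generateFrom {s | ∃ u : ℝ, 0 ≤ u ∧ u ≤ t ∧ s = {ω | u < τ ω}}

theorem measurableSet_defaultSigmaAlgebra_lt {u : ℝ} (hu : 0 ≤ u) (hut : u ≤ t) :
    MeasurableSet[defaultSigmaAlgebra τ t] {ω | u < τ ω} :=
  measurableSet_generateFrom ⟨u, hu, hut, rfl⟩

theorem measurableSet_defaultSigmaAlgebra_le (ht : 0 ≤ t) :
    MeasurableSet[defaultSigmaAlgebra τ t] {ω | τ ω ≤ t} := by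
  simpa only [Set.compl_def, Set.mem_ofPred_eq, not_lt] using
    (measurableSet_defaultSigmaAlgebra_lt (τ := τ) ht le_rfl).compl

theorem defaultSigmaAlgebra_le_comap :
    defaultSigmaAlgebra τ t ≤ MeasurableSpace.comap τ inferInstance :=
  generateFrom_le <| by
    rintro _ ⟨u, -, -, rfl⟩
    exact ⟨Set.Ioi u, measurableSet_Ioi, rfl⟩

theorem comap_le_traceOn_defaultSigmaAlgebra (hτ : ∀ ω, 0 ≤ τ ω) (ht : 0 ≤ t) :
    MeasurableSpace.comap τ inferInstance ≤
      traceOn (defaultSigmaAlgebra τ t) {ω | τ ω ≤ t}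
        (measurableSet_defaultSigmaAlgebra_le ht) := by
  rw [BorelSpace.measurable_eq (α := ℝ), borel_eq_generateFrom_Ioi, comap_generateFrom]
  refine generateFrom_le ?_
  rintro _ ⟨_, ⟨u, rfl⟩, rfl⟩
  rw [measurableSet_traceOn]
  rcases lt_or_ge u 0 with hu | hu
  · rw [(Set.inter_eq_left (t := τ ⁻¹' Set.Ioi u)).mpr fun ω _ => hu.trans_le (hτ ω)]
    exact measurableSet_defaultSigmaAlgebra_le ht
  rcases le_or_gt u t with hut | htu
  · exact (measurableSet_defaultSigmaAlgebra_le ht).inter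
      (measurableSet_defaultSigmaAlgebra_lt hu hut)
  · have hempty : {ω | τ ω ≤ t} ∩ τ ⁻¹' Set.Ioi u = ∅ :=
      Set.disjoint_iff_inter_eq_empty.mp
        (Set.disjoint_left.mpr fun ω hωt hωu => (htu.trans hωu).not_ge hωt)
    exact hempty ▸ @MeasurableSet.empty _ (defaultSigmaAlgebra τ t)

end DefaultTime

theorem indicator_condexp_join_eq_of_le_general
    {Ω : Type*} {m0 : MeasurableSpace Ω} {P : Measure Ω} [IsProbabilityMeasure P]
    {τ : Ω → ℝ} (hτ_meas : Measurable τ) (hτ_nonneg : ∀ ω, 0 ≤ τ ω)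
    {t : ℝ} (ht : 0 ≤ t)
    {𝓗 : MeasurableSpace Ω} (h𝓗 : 𝓗 ≤ m0)
    (𝓙 : MeasurableSpace Ω)
    (h𝓙 : 𝓙 = MeasurableSpace.generateFrom
      {s | ∃ u : ℝ, 0 ≤ u ∧ u ≤ t ∧ s = {ω | u < τ ω}})
    {Y : Ω → ℝ} :
    (fun ω => Set.indicator {ω' | τ ω' ≤ t} (fun _ => (1 : ℝ)) ω * condExp (𝓙 ⊔ 𝓗) P Y ω)
      =ᵐ[P]
    (fun ω => Set.indicator {ω' | τ ω' ≤ t} (fun _ => (1 : ℝ)) ω *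
      condExp (MeasurableSpace.comap τ inferInstance ⊔ 𝓗) P Y ω) := by
  change 𝓙 = defaultSigmaAlgebra τ t at h𝓙
  subst h𝓙
  have hτ_le := hτ_meas.comap_le
  have hrestr := condExp_ae_eq_restrict_of_le_traceOn (μ := P) (f := Y)
    (sup_le (defaultSigmaAlgebra_le_comap.trans hτ_le) h𝓗) (sup_le hτ_le h𝓗)
    (sup_le_sup_right defaultSigmaAlgebra_le_comap 𝓗) _
    (sup_le_traceOn_sup _ (comap_le_traceOn_defaultSigmaAlgebra hτ_nonneg ht))
  exact indicator_one_mul_ae_eq_of_ae_eq_restrict (hτ_meas measurableSet_Iic) hrestr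

/-- On the event `{τ ≤ t}`, conditioning on `𝓙_t ⊔ 𝓗` is the same as conditioning on
`σ(τ) ⊔ 𝓗`: for every integrable `Y`, almost surely
`1_{τ ≤ t} · E[Y | 𝓙_t ⊔ 𝓗] = 1_{τ ≤ t} · E[Y | σ(τ) ⊔ 𝓗]`. -/
theorem indicator_condexp_join_eq_of_le
    {Ω : Type*} {m0 : MeasurableSpace Ω} {P : Measure Ω} [IsProbabilityMeasure P]
    {τ : Ω → ℝ} (hτ_meas : Measurable τ) (hτ_nonneg : ∀ ω, 0 ≤ τ ω)
    {t : ℝ} (ht : 0 ≤ t)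
    {𝓗 : MeasurableSpace Ω} (h𝓗 : 𝓗 ≤ m0)
    (𝓙 : MeasurableSpace Ω)
    (h𝓙 : 𝓙 = MeasurableSpace.generateFrom
      {s | ∃ u : ℝ, 0 ≤ u ∧ u ≤ t ∧ s = {ω | u < τ ω}})
    {Y : Ω → ℝ} (hY_int : Integrable Y P) :
    (fun ω => Set.indicator {ω' | τ ω' ≤ t} (fun _ => (1 : ℝ)) ω * condExp (𝓙 ⊔ 𝓗) P Y ω)
      =ᵐ[P]
    (fun ω => Set.indicator {ω' | τ ω' ≤ t} (fun _ => (1 : ℝ)) ω *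
      condExp (MeasurableSpace.comap τ inferInstance ⊔ 𝓗) P Y ω) :=
  indicator_condexp_join_eq_of_le_general hτ_meas hτ_nonneg ht h𝓗 𝓙 h𝓙
end

section
/- Let (Ω, 𝓕, P) be a probability space, τ : Ω → [0, ∞) a measurable random time, t ≥ 0, and 𝓗 a sub-σ-algebra of 𝓕. Let 𝓙_t be the σ-algebra generated by the events {τ > u} for u ∈ [0, t], set 𝓕_t = 𝓙_t ⊔ 𝓗, and assume P(τ > t | 𝓗) > 0 almost surely. Then for every integrable random variable Y one has, almost surely, E[Y | 𝓕_t] = (1_{τ > t} / P(τ > t | 𝓗)) · E[1_{τ > t} · Y | 𝓗] + 1_{τ ≤ t} · E[Y | σ(τ) ⊔ 𝓗]. -/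
/-!
The trace of a σ-algebra `m` on a set `s` is encoded as `m.comap (Subtype.val : s → Ω)`.

Every generator `{τ > u}`, `u ≤ t`, of `𝓙_t` contains `{τ > t}`, so on `{τ > t}` the trace of
`𝓙_t ⊔ 𝓗` is that of `𝓗`. Hence `E[Y | 𝓕_t]` agrees on `{τ > t}` with an `𝓗`-measurable `k`, and
conditioning `k · 1_{τ > t}` on `𝓗` gives `k · P(τ > t | 𝓗) = E[1_{τ > t} Y | 𝓗]`. On `{τ ≤ t}`
we have `τ = τ ∧ t`, which is `𝓙_t`-measurable because `τ ≥ 0`; so there `σ(τ) ⊔ 𝓗` traces into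
`𝓕_t`, and the tower property identifies `1_{τ ≤ t} E[Y | 𝓕_t]` with
`1_{τ ≤ t} E[Y | σ(τ) ⊔ 𝓗]`.
-/

open MeasureTheory MeasurableSpace Set

theorem MeasurableSpace.comap_subtype_val_generateFrom_eq_bot {Ω : Type*} {s : Set Ω}
    {G : Set (Set Ω)} (hG : ∀ g ∈ G, s ⊆ g) :
    (generateFrom G).comap (Subtype.val : s → Ω) = ⊥ := by
  refine le_bot_iff.mp ?_
  rw [comap_generateFrom]
  refine generateFrom_le ?_
  rintro _ ⟨g, hg, rfl⟩
  rw [preimage_eq_univ_iff.mpr (by simpa using hG g hg)]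
  exact MeasurableSet.univ

namespace MeasureTheory

theorem StronglyMeasurable.exists_stronglyMeasurable_eqOn_of_comap_val_le {Ω E : Type*}
    [TopologicalSpace E] [TopologicalSpace.IsCompletelyMetrizableSpace E] [Nonempty E]
    {s : Set Ω} {m m' : MeasurableSpace Ω}
    (htrace : m'.comap (Subtype.val : s → Ω) ≤ m.comap Subtype.val)
    {f : Ω → E} (hf : StronglyMeasurable[m'] f) :
    ∃ k : Ω → E, StronglyMeasurable[m] k ∧ EqOn f k s := by
  have hfs : StronglyMeasurable[m.comap Subtype.val] (f ∘ (Subtype.val : s → Ω)) :=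
    (hf.comp_measurable (comap_measurable _)).mono htrace
  obtain ⟨k, hk, hfk⟩ := StronglyMeasurable.exists_eq_measurable_comp (mY := m) hfs
  exact ⟨k, hk, fun ω hω => congrFun hfk ⟨ω, hω⟩⟩

section CondExp

variable {Ω : Type*} {m m' m0 : MeasurableSpace Ω} {μ : Measure Ω} [IsFiniteMeasure μ]
  {s : Set Ω} {Y : Ω → ℝ}

theorem indicator_condExp_ae_eq_indicator_condExp_of_comap_val_le (hm : m ≤ m')
    (hm' : m' ≤ m0) (hs : MeasurableSet[m] s)
    (htrace : m'.comap (Subtype.val : s → Ω) ≤ m.comap Subtype.val) (hY : Integrable Y μ) :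
    s.indicator (μ[Y|m]) =ᵐ[μ] s.indicator (μ[Y|m']) := by
  obtain ⟨k, hk, hYk⟩ : ∃ k, StronglyMeasurable[m] k ∧ EqOn (μ[Y|m']) k s :=
    stronglyMeasurable_condExp.exists_stronglyMeasurable_eqOn_of_comap_val_le htrace
  have hind : s.indicator (μ[Y|m']) = s.indicator k := indicator_congr hYk
  have hint : Integrable (s.indicator k) μ :=
    hind ▸ integrable_condExp.indicator (hm.trans hm' _ hs)
  calc s.indicator (μ[Y|m]) =ᵐ[μ] μ[s.indicator Y|m] := (condExp_indicator hY hs).symm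
    _ =ᵐ[μ] μ[μ[s.indicator Y|m']|m] := (condExp_condExp_of_le hm hm').symm
    _ =ᵐ[μ] μ[s.indicator (μ[Y|m'])|m] := condExp_congr_ae (condExp_indicator hY (hm _ hs))
    _ = s.indicator (μ[Y|m']) := by
      rw [hind]; exact condExp_of_stronglyMeasurable (hm.trans hm') (hk.indicator hs) hint

theorem indicator_condExp_ae_eq_div_of_comap_val_le (hm : m ≤ m') (hm' : m' ≤ m0)
    (hs : MeasurableSet[m'] s) (htrace : m'.comap (Subtype.val : s → Ω) ≤ m.comap Subtype.val)
    (hpos : ∀ᵐ ω ∂μ, 0 < μ[s.indicator (fun _ => (1 : ℝ))|m] ω) (hY : Integrable Y μ) :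
    s.indicator (μ[Y|m']) =ᵐ[μ]
      fun ω => s.indicator (fun _ => (1 : ℝ)) ω / μ[s.indicator (fun _ => (1 : ℝ))|m] ω *
        μ[s.indicator Y|m] ω := by
  set χ : Ω → ℝ := s.indicator fun _ => 1
  obtain ⟨k, hk, hYk⟩ : ∃ k, StronglyMeasurable[m] k ∧ EqOn (μ[Y|m']) k s :=
    stronglyMeasurable_condExp.exists_stronglyMeasurable_eqOn_of_comap_val_le htrace
  have hind : s.indicator (μ[Y|m']) = k * χ := by
    ext ω
    by_cases hω : ω ∈ s
    · simp [χ, hω, hYk hω]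
    · simp [χ, hω]
  have hint : Integrable (k * χ) μ := hind ▸ integrable_condExp.indicator (hm' _ hs)
  have hpull : μ[k * χ|m] =ᵐ[μ] k * μ[χ|m] :=
    condExp_mul_of_stronglyMeasurable_left hk hint ((integrable_const 1).indicator (hm' _ hs))
  have htower : μ[k * χ|m] =ᵐ[μ] μ[s.indicator Y|m] := by
    rw [← hind]
    calc μ[s.indicator (μ[Y|m'])|m] =ᵐ[μ] μ[μ[s.indicator Y|m']|m] :=
          condExp_congr_ae (condExp_indicator hY hs).symm
      _ =ᵐ[μ] μ[s.indicator Y|m] := condExp_condExp_of_le hm hm'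
  filter_upwards [hpull, htower, hpos] with ω hpullω htowerω hposω
  rw [hind, ← htowerω, hpullω]
  simp only [Pi.mul_apply]
  field_simp

end CondExp

section Survival

variable {Ω : Type*} {τ : Ω → ℝ} {t : ℝ}

/-- The paper's `𝓙_t`. -/
abbrev survivalSigmaAlgebra (τ : Ω → ℝ) (t : ℝ) : MeasurableSpace Ω :=
  generateFrom {s | ∃ u : ℝ, 0 ≤ u ∧ u ≤ t ∧ s = {ω | u < τ ω}}

theorem measurableSet_survivalSigmaAlgebra {u : ℝ} (hu : 0 ≤ u) (hut : u ≤ t) :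
    MeasurableSet[survivalSigmaAlgebra τ t] {ω | u < τ ω} :=
  measurableSet_generateFrom ⟨u, hu, hut, rfl⟩

theorem survivalSigmaAlgebra_le_comap :
    survivalSigmaAlgebra τ t ≤ MeasurableSpace.comap τ inferInstance :=
  generateFrom_le <| by
    rintro _ ⟨u, -, -, rfl⟩
    exact ⟨Ioi u, measurableSet_Ioi, rfl⟩

theorem measurable_min_survivalSigmaAlgebra (hτ : ∀ ω, 0 ≤ τ ω) :
    Measurable[survivalSigmaAlgebra τ t] fun ω => min (τ ω) t := by
  refine measurable_of_Ioi fun u => ?_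
  rcases le_or_gt t u with htu | hut
  · convert MeasurableSet.empty
    ext ω
    simpa using fun _ => htu
  rcases lt_or_ge u 0 with hu | hu
  · convert MeasurableSet.univ
    ext ω
    simpa using ⟨hu.trans_le (hτ ω), hut⟩
  · convert measurableSet_survivalSigmaAlgebra hu hut.le using 1
    ext ω
    simpa using fun _ => hut

theorem comap_subtype_val_survivalSigmaAlgebra_eq_bot :
    (survivalSigmaAlgebra τ t).comap (Subtype.val : {ω | t < τ ω} → Ω) = ⊥ :=
  comap_subtype_val_generateFrom_eq_bot <| by
    rintro _ ⟨u, -, hut, rfl⟩ ω hω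
    exact hut.trans_lt hω

theorem comap_subtype_val_comap_le_survivalSigmaAlgebra (hτ : ∀ ω, 0 ≤ τ ω) :
    (MeasurableSpace.comap τ inferInstance).comap (Subtype.val : {ω | τ ω ≤ t} → Ω) ≤
      (survivalSigmaAlgebra τ t).comap Subtype.val := by
  have hτ_eq : τ ∘ (Subtype.val : {ω | τ ω ≤ t} → Ω) = (fun ω => min (τ ω) t) ∘ Subtype.val :=
    funext fun ω => (min_eq_left ω.2).symm
  rw [comap_comp, hτ_eq, ← comap_comp]
  exact comap_mono (measurable_min_survivalSigmaAlgebra hτ).comap_le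

end Survival

end MeasureTheory

/-- **Generalized Jeanblanc–Rutkowski formula** (formula (14) of the paper).
For a random time `τ ≥ 0`, `𝓙_t = σ({τ > u}, u ≤ t)`, `𝓕_t = 𝓙_t ⊔ 𝓗`, and
`P(τ > t | 𝓗) > 0` a.s., every integrable `Y` satisfies, almost surely,
`E[Y | 𝓕_t] = (1_{τ > t} / P(τ > t | 𝓗)) · E[1_{τ > t} Y | 𝓗]
              + 1_{τ ≤ t} · E[Y | σ(τ) ⊔ 𝓗]`. -/
theorem generalized_jeanblanc_rutkowski_formula
    {Ω : Type*} {m0 : MeasurableSpace Ω} {P : Measure Ω} [IsProbabilityMeasure P]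
    {τ : Ω → ℝ} (hτ_meas : Measurable τ) (hτ_nonneg : ∀ ω, 0 ≤ τ ω)
    {t : ℝ} (ht : 0 ≤ t)
    {𝓗 : MeasurableSpace Ω} (h𝓗 : 𝓗 ≤ m0)
    (𝓙 : MeasurableSpace Ω)
    (h𝓙 : 𝓙 = MeasurableSpace.generateFrom
      {s | ∃ u : ℝ, 0 ≤ u ∧ u ≤ t ∧ s = {ω | u < τ ω}})
    (hpos : ∀ᵐ ω ∂P,
      0 < condExp 𝓗 P ((Set.indicator {ω' | t < τ ω'} (fun _ => (1 : ℝ)))) ω)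
    {Y : Ω → ℝ} (hY_int : Integrable Y P) :
    condExp (𝓙 ⊔ 𝓗) P Y =ᵐ[P] fun ω =>
      Set.indicator {ω' | t < τ ω'} (fun _ => (1 : ℝ)) ω
          / condExp 𝓗 P ((Set.indicator {ω' | t < τ ω'} (fun _ => (1 : ℝ)))) ω
          * condExp 𝓗 P (fun ω' =>
              Set.indicator {ω'' | t < τ ω''} (fun _ => (1 : ℝ)) ω' * Y ω') ω
        + Set.indicator {ω' | τ ω' ≤ t} (fun _ => (1 : ℝ)) ω *
            condExp (MeasurableSpace.comap τ inferInstance ⊔ 𝓗) P Y ω := by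
  change 𝓙 = survivalSigmaAlgebra τ t at h𝓙
  subst h𝓙
  set A : Set Ω := {ω | t < τ ω}
  have hAc : Aᶜ = {ω | τ ω ≤ t} := by ext; simp [A]
  have hA : MeasurableSet[survivalSigmaAlgebra τ t] A :=
    measurableSet_survivalSigmaAlgebra ht le_rfl
  have hle : survivalSigmaAlgebra τ t ⊔ 𝓗 ≤ m0 :=
    sup_le (survivalSigmaAlgebra_le_comap.trans hτ_meas.comap_le) h𝓗
  have hsurvival := indicator_condExp_ae_eq_div_of_comap_val_le (m := 𝓗)
    (m' := survivalSigmaAlgebra τ t ⊔ 𝓗) le_sup_right hle (le_sup_left (b := 𝓗) _ hA)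
    (by rw [comap_sup, comap_subtype_val_survivalSigmaAlgebra_eq_bot, bot_sup_eq]) hpos hY_int
  have hdefault := indicator_condExp_ae_eq_indicator_condExp_of_comap_val_le
    (sup_le_sup_right survivalSigmaAlgebra_le_comap 𝓗) (sup_le hτ_meas.comap_le h𝓗)
    (hAc ▸ (le_sup_left (b := 𝓗) _ hA).compl)
    (by rw [comap_sup, comap_sup]
        exact sup_le_sup_right (comap_subtype_val_comap_le_survivalSigmaAlgebra hτ_nonneg) _)
    hY_int
  have hAY : (fun ω => A.indicator (fun _ => (1 : ℝ)) ω * Y ω) = A.indicator Y := by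
    ext ω; simp [indicator_apply]
  filter_upwards [hsurvival, hdefault] with ω hsurvivalω hdefaultω
  rw [← indicator_self_add_compl_apply A (P[Y|survivalSigmaAlgebra τ t ⊔ 𝓗]) ω, hAc,
    hsurvivalω, hdefaultω, hAY]
  simp [indicator_apply]
end
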